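/- Let A be a complex n×n H-matrix, and let M and F be complex n×n matrices satisfying ⟨M⟩ − |M − A| = ⟨A⟩ and ⟨F⟩ − |F − A| = ⟨A⟩. Then M and F are invertible and the 2n×2n block matrix Q = [[0, I − M⁻¹A], [I − F⁻¹A, 0]] satisfies ρ(|Q|) < 1. -/

import Mathlib

open Matrix

/-- Spectral radius of a real square matrix: the supremum of the moduli of its
complex eigenvalues. -/
noncomputable def specRad {m : Type*} [Fintype m] [DecidableEq m]
    (A : Matrix m m ℝ) : ℝ :=
  sSup ((fun z : ℂ => ‖z‖) '' spectrum ℂ (A.map Complex.ofReal))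

/-- Entrywise absolute value (modulus) of a complex matrix. -/
noncomputable def cabs {m l : Type*} (A : Matrix m l ℂ) : Matrix m l ℝ :=
  fun i j => ‖A i j‖

/-- Comparison matrix of a complex square matrix. -/
noncomputable def compMat {m : Type*} [DecidableEq m]
    (A : Matrix m m ℂ) : Matrix m m ℝ :=
  fun i j => if i = j then ‖A i j‖ else -‖A i j‖

/-- M-matrix: there is `α` with `α I - A ≥ 0` entrywise and `α > ρ(α I - A)`. -/
def IsMMat {m : Type*} [Fintype m] [DecidableEq m]
    (A : Matrix m m ℝ) : Prop :=
  ∃ α : ℝ, (∀ i j, 0 ≤ (α • (1 : Matrix m m ℝ) - A) i j) ∧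
    specRad (α • (1 : Matrix m m ℝ) - A) < α

/-- H-matrix: a complex square matrix whose comparison matrix is an M-matrix. -/
def IsHMat {m : Type*} [Fintype m] [DecidableEq m]
    (A : Matrix m m ℂ) : Prop :=
  IsMMat (compMat A)

/-!
Since `⟨A⟩` is an M-matrix, a truncated Neumann series (made convergent by Gelfand's formula)
gives `u > 0` with `⟨A⟩ u > 0`. The hypothesis on `M` says `⟨M⟩ u = ⟨A⟩ u + |M - A| u`, so `M`
is strictly diagonally dominant after scaling the columns by `u`, hence invertible, and
`|M - A| u ≤ θ ⟨M⟩ u` for some `θ < 1`. Ostrowski's inequality `⟨M⟩ |M⁻¹ B| ≤ |B|` and the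
inverse monotonicity of `⟨M⟩` then give `|I - M⁻¹ A| u ≤ θ u`; likewise for `F`. Hence
`|Q| (u, u) ≤ θ (u, u)`, and a positive vector contracted by a nonnegative matrix bounds its
spectral radius.
-/

lemma exists_forall_le_ratio_mul {m : Type*} [Finite m] [Nonempty m] (a w : m → ℝ)
    (hw : ∀ i, 0 < w i) :
    ∃ i₀, ∀ i, a i ≤ a i₀ / w i₀ * w i := by
  obtain ⟨i₀, hi₀⟩ := Finite.exists_max fun i => a i / w i
  exact ⟨i₀, fun i => (div_le_iff₀ (hw i)).mp (hi₀ i)⟩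


lemma exists_lt_one_mul_le {m : Type*} [Finite m] {d t : m → ℝ} (hd : ∀ i, 0 ≤ d i)
    (hdt : ∀ i, d i < t i) : ∃ θ, 0 ≤ θ ∧ θ < 1 ∧ ∀ i, d i ≤ θ * t i := by
  cases isEmpty_or_nonempty m
  · exact ⟨0, le_rfl, one_pos, isEmptyElim⟩
  have ht : ∀ i, 0 < t i := fun i => (hd i).trans_lt (hdt i)
  obtain ⟨i₀, hi₀⟩ := exists_forall_le_ratio_mul d t ht
  exact ⟨d i₀ / t i₀, div_nonneg (hd i₀) (ht i₀).le, (div_lt_one (ht i₀)).2 (hdt i₀), hi₀⟩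

section ComparisonMatrix

variable {m : Type*} [Fintype m] [DecidableEq m]

lemma sum_compMat_mul (X : Matrix m m ℂ) (f : m → ℝ) (i : m) :
    ∑ k, compMat X i k * f k = ‖X i i‖ * f i - ∑ k ∈ Finset.univ.erase i, ‖X i k‖ * f k := by
  rw [← Finset.add_sum_erase _ _ (Finset.mem_univ i), sub_eq_add_neg, ← Finset.sum_neg_distrib]
  congr 1
  · simp [compMat]
  · refine Finset.sum_congr rfl fun k hk => ?_
    simp [compMat, Ne.symm (Finset.ne_of_mem_erase hk)]

lemma compMat_mul_cabs_le {ι : Type*} (X : Matrix m m ℂ) (W : Matrix m ι ℂ) (i : m) (j : ι) :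
    (compMat X * cabs W) i j ≤ cabs (X * W) i j := by
  rw [mul_apply, sum_compMat_mul]
  have hsplit : (X * W) i j = X i i * W i j + ∑ k ∈ Finset.univ.erase i, X i k * W k j := by
    rw [mul_apply, Finset.add_sum_erase _ (fun k => X i k * W k j) (Finset.mem_univ i)]
  have hoff : ‖∑ k ∈ Finset.univ.erase i, X i k * W k j‖
      ≤ ∑ k ∈ Finset.univ.erase i, ‖X i k‖ * cabs W k j := by
    refine (norm_sum_le _ _).trans_eq (Finset.sum_congr rfl fun k _ => norm_mul _ _)
  have := norm_sub_le (X i i * W i j + ∑ k ∈ Finset.univ.erase i, X i k * W k j)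
    (∑ k ∈ Finset.univ.erase i, X i k * W k j)
  rw [add_sub_cancel_right, norm_mul, ← hsplit] at this
  simp only [cabs] at hoff ⊢
  linarith

lemma isUnit_of_compMat_mulVec_pos {X : Matrix m m ℂ} {u : m → ℝ} (hu : ∀ i, 0 < u i)
    (hXu : ∀ i, 0 < (compMat X *ᵥ u) i) : IsUnit X := by
  have hdom : ∀ k, ∑ j ∈ Finset.univ.erase k, ‖(X * diagonal fun i => (u i : ℂ)) k j‖
      < ‖(X * diagonal fun i => (u i : ℂ)) k k‖ := by
    intro k
    have := hXu k
    rw [mulVec, dotProduct, sum_compMat_mul] at this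
    simpa [mul_diagonal, norm_mul, Complex.norm_real, abs_of_pos (hu _)] using this
  have hdet := det_ne_zero_of_sum_row_lt_diag hdom
  rw [det_mul] at hdet
  exact (isUnit_iff_isUnit_det X).mpr (left_ne_zero_of_mul hdet).isUnit

lemma le_mul_of_mulVec_le {C : Matrix m m ℝ} (hC : ∀ i j, i ≠ j → C i j ≤ 0) {u : m → ℝ}
    (hu : ∀ i, 0 < u i) (hCu : ∀ i, 0 < (C *ᵥ u) i) {v : m → ℝ} {θ : ℝ}
    (hv : ∀ i, (C *ᵥ v) i ≤ θ * (C *ᵥ u) i) (i : m) : v i ≤ θ * u i := by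
  cases isEmpty_or_nonempty m
  · exact isEmptyElim i
  obtain ⟨i₀, hi₀⟩ := exists_forall_le_ratio_mul v u hu
  set c := v i₀ / u i₀
  -- In the row where `v / u` peaks, the off-diagonal signs give `c (C u) ≤ C v`.
  have hgap : 0 ≤ (C *ᵥ (v - c • u)) i₀ := by
    refine Finset.sum_nonneg fun k _ => ?_
    by_cases hk : i₀ = k
    · subst hk
      simp [c, div_mul_cancel₀ _ (hu i₀).ne']
    · exact mul_nonneg_of_nonpos_of_nonpos (hC _ _ hk) (by simpa using hi₀ k)
  have hc : c ≤ θ := by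
    rw [mulVec_sub, mulVec_smul, Pi.sub_apply, Pi.smul_apply, smul_eq_mul] at hgap
    nlinarith [hv i₀, hCu i₀]
  exact (hi₀ i).trans (mul_le_mul_of_nonneg_right hc (hu i).le)

end ComparisonMatrix

section SpectralRadius

variable {m : Type*} [Fintype m] [DecidableEq m]

lemma specRad_nonneg (N : Matrix m m ℝ) : 0 ≤ specRad N :=
  Real.sSup_nonneg <| by rintro _ ⟨z, -, rfl⟩; exact norm_nonneg z

lemma norm_le_specRad {N : Matrix m m ℝ} {z : ℂ} (hz : z ∈ spectrum ℂ (N.map Complex.ofReal)) :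
    ‖z‖ ≤ specRad N :=
  le_csSup ((Matrix.finite_spectrum _).image _).bddAbove ⟨z, hz, rfl⟩

lemma exists_mulVec_eq_smul_of_mem_spectrum {B : Matrix m m ℂ} {z : ℂ} (hz : z ∈ spectrum ℂ B) :
    ∃ x : m → ℂ, x ≠ 0 ∧ B *ᵥ x = z • x := by
  rw [← Matrix.spectrum_toLin', ← Module.End.hasEigenvalue_iff_mem_spectrum] at hz
  obtain ⟨x, hx⟩ := hz.exists_hasEigenvector
  exact ⟨x, hx.2, by simpa using Module.End.mem_eigenspace_iff.mp hx.1⟩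

lemma specRad_le_of_mulVec_le {P : Matrix m m ℝ} (hP : ∀ i j, 0 ≤ P i j) {w : m → ℝ}
    (hw : ∀ i, 0 < w i) {θ : ℝ} (hθ : 0 ≤ θ) (hPw : ∀ i, (P *ᵥ w) i ≤ θ * w i) :
    specRad P ≤ θ := by
  refine Real.sSup_le ?_ hθ
  rintro _ ⟨z, hz, rfl⟩
  obtain ⟨x, hx0, hx⟩ := exists_mulVec_eq_smul_of_mem_spectrum hz
  obtain ⟨j, hj⟩ := Function.ne_iff.mp hx0
  have : Nonempty m := ⟨j⟩
  obtain ⟨i₀, hi₀⟩ := exists_forall_le_ratio_mul (fun i => ‖x i‖) w hw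
  set c := ‖x i₀‖ / w i₀
  have hc : 0 < c := pos_of_mul_pos_left ((norm_pos_iff.mpr hj).trans_le (hi₀ j)) (hw j).le
  have hrow : ‖z‖ * ‖x i₀‖ ≤ c * (P *ᵥ w) i₀ := by
    calc ‖z‖ * ‖x i₀‖ = ‖∑ k, (P i₀ k : ℂ) * x k‖ := by
          rw [← norm_mul, ← smul_eq_mul, ← Pi.smul_apply, ← hx]; rfl
      _ ≤ ∑ k, P i₀ k * (c * w k) := by
          refine (norm_sum_le _ _).trans (Finset.sum_le_sum fun k _ => ?_)
          rw [norm_mul, Complex.norm_real, Real.norm_of_nonneg (hP i₀ k)]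
          exact mul_le_mul_of_nonneg_left (hi₀ k) (hP i₀ k)
      _ = c * (P *ᵥ w) i₀ := by
          rw [mulVec, dotProduct, Finset.mul_sum]
          exact Finset.sum_congr rfl fun k _ => by ring
  have hx₀ : ‖x i₀‖ = c * w i₀ := (div_mul_cancel₀ _ (hw i₀).ne').symm
  rw [hx₀] at hrow
  nlinarith [hPw i₀, mul_pos hc (hw i₀)]

section Gelfand

open Filter

attribute [local instance] Matrix.linftyOpNormedAddCommGroup Matrix.linftyOpNormedRing
  Matrix.linftyOpNormedAlgebra

-- Gelfand's formula for the row-sum operator norm.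
lemma eventually_pow_mulVec_one_lt {N : Matrix m m ℝ} {α : ℝ} (hα : specRad N < α) :
    ∀ᶠ k in atTop, ∀ i, (N ^ k *ᵥ fun _ => 1) i < α ^ k := by
  have : CompleteSpace (Matrix m m ℂ) := FiniteDimensional.complete ℂ _
  set B := N.map Complex.ofReal
  have hα₀ : 0 < α := (specRad_nonneg N).trans_lt hα
  have hρ : spectralRadius ℂ B < ENNReal.ofReal α := by
    refine lt_of_le_of_lt (iSup₂_le fun z hz => ?_)
      ((ENNReal.ofReal_lt_ofReal_iff hα₀).mpr hα)
    rw [← enorm_eq_nnnorm, ← ofReal_norm]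
    exact ENNReal.ofReal_le_ofReal (norm_le_specRad hz)
  have hgelfand := spectrum.pow_norm_pow_one_div_tendsto_nhds_spectralRadius B
  filter_upwards [hgelfand.eventually_lt_const hρ, eventually_ge_atTop 1] with k hk hk₁ i
  have hk₀ : k ≠ 0 := by omega
  have hroot : ‖B ^ k‖ ^ (1 / k : ℝ) < α :=
    (ENNReal.ofReal_lt_ofReal_iff hα₀).mp hk
  have hnorm : ‖B ^ k‖ < α ^ k := by
    rw [one_div] at hroot
    simpa [Real.rpow_inv_natCast_pow (norm_nonneg _) hk₀] using
      pow_lt_pow_left₀ hroot (by positivity) hk₀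
  have hentry : ((N ^ k *ᵥ fun _ => 1) i : ℂ) = (B ^ k *ᵥ fun _ => 1) i := by
    rw [← Complex.ofRealHom_eq_coe, RingHom.map_mulVec]
    change (Complex.ofRealHom.mapMatrix (N ^ k) *ᵥ _) i = _
    rw [map_pow]
    rfl
  calc (N ^ k *ᵥ fun _ => 1) i ≤ ‖(B ^ k *ᵥ fun _ => 1) i‖ := by
        rw [← hentry, Complex.norm_real]; exact le_abs_self _
    _ ≤ ‖B ^ k‖ * ‖fun _ : m => (1 : ℂ)‖ :=
        (norm_le_pi_norm _ i).trans (linfty_opNorm_mulVec _ _)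
    _ ≤ ‖B ^ k‖ :=
        mul_le_of_le_one_right (norm_nonneg _) ((pi_norm_const_le _).trans_eq norm_one)
    _ < α ^ k := hnorm

end Gelfand

lemma pow_mulVec_nonneg {N : Matrix m m ℝ} (hN : ∀ i j, 0 ≤ N i j) {v : m → ℝ} (hv : 0 ≤ v)
    (k : ℕ) : 0 ≤ N ^ k *ᵥ v := by
  induction k with
  | zero => simpa using hv
  | succ k ih =>
    rw [pow_succ', ← mulVec_mulVec]
    exact fun i => Finset.sum_nonneg fun j _ => mul_nonneg (hN i j) (ih j)

open Filter in
lemma IsMMat.exists_pos_mulVec_pos {C : Matrix m m ℝ} (hC : IsMMat C) :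
    ∃ u : m → ℝ, (∀ i, 0 < u i) ∧ ∀ i, 0 < (C *ᵥ u) i := by
  obtain ⟨α, hN, hρ⟩ := hC
  set N := α • (1 : Matrix m m ℝ) - C
  have hα : 0 < α := (specRad_nonneg N).trans_lt hρ
  obtain ⟨K, hK, hK₁⟩ :=
    ((eventually_pow_mulVec_one_lt hρ).and (eventually_ge_atTop 1)).exists
  set B := α⁻¹ • N
  set one : m → ℝ := fun _ => 1
  have hB : ∀ i j, 0 ≤ B i j := fun i j => mul_nonneg (inv_nonneg.2 hα.le) (hN i j)
  have hCB : C = α • (1 - B) := by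
    rw [smul_sub, smul_smul, mul_inv_cancel₀ hα.ne', one_smul, sub_sub_cancel]
  have hBK : ∀ i, (B ^ K *ᵥ one) i < 1 := fun i => by
    rw [smul_pow, smul_mulVec, Pi.smul_apply, smul_eq_mul, inv_pow,
      inv_mul_lt_one₀ (by positivity)]
    exact hK i
  -- `u` is a truncated Neumann series for `(1 - B)⁻¹ 1`.
  refine ⟨(∑ k ∈ Finset.range K, B ^ k) *ᵥ one, fun i => ?_, fun i => ?_⟩
  · rw [sum_mulVec, Finset.sum_apply]
    calc (0 : ℝ) < (B ^ 0 *ᵥ one) i := by simp [one]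
      _ ≤ ∑ k ∈ Finset.range K, (B ^ k *ᵥ one) i :=
          Finset.single_le_sum (fun k _ => pow_mulVec_nonneg hB (fun _ => zero_le_one) k i)
            (Finset.mem_range.2 hK₁)
  · rw [mulVec_mulVec, hCB, smul_mul_assoc, mul_neg_geom_sum, smul_mulVec, sub_mulVec,
      one_mulVec]
    simpa [one] using mul_pos hα (sub_pos.2 (hBK i))

end SpectralRadius

section Splitting

variable {m : Type*} [Fintype m] [DecidableEq m]

lemma isUnit_and_exists_cabs_one_sub_inv_mul_mulVec_le {A X : Matrix m m ℂ}
    (hX : compMat X - cabs (X - A) = compMat A) {u : m → ℝ} (hu : ∀ i, 0 < u i)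
    (hAu : ∀ i, 0 < (compMat A *ᵥ u) i) :
    IsUnit X ∧ ∃ θ, 0 ≤ θ ∧ θ < 1 ∧ ∀ i, (cabs (1 - X⁻¹ * A) *ᵥ u) i ≤ θ * u i := by
  have hd : ∀ i, 0 ≤ (cabs (X - A) *ᵥ u) i :=
    fun i => Finset.sum_nonneg fun j _ => mul_nonneg (norm_nonneg _) (hu j).le
  have hXu : ∀ i, (compMat X *ᵥ u) i = (compMat A *ᵥ u) i + (cabs (X - A) *ᵥ u) i := by
    intro i
    rw [← hX, sub_mulVec, Pi.sub_apply, sub_add_cancel]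
  have hXpos : ∀ i, 0 < (compMat X *ᵥ u) i := fun i => by linarith [hXu i, hAu i, hd i]
  have hunit := isUnit_of_compMat_mulVec_pos hu hXpos
  obtain ⟨θ, hθ₀, hθ₁, hθ⟩ :=
    exists_lt_one_mul_le (t := compMat X *ᵥ u) hd fun i => by linarith [hXu i, hAu i]
  have hXW : X * (1 - X⁻¹ * A) = X - A := by
    rw [mul_sub, mul_one, ← mul_assoc, mul_nonsing_inv _ ((isUnit_iff_isUnit_det X).mp hunit),
      one_mul]
  have hoff : ∀ i j, i ≠ j → compMat X i j ≤ 0 := fun i j h => by simp [compMat, h]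
  refine ⟨hunit, θ, hθ₀, hθ₁, le_mul_of_mulVec_le hoff hu hXpos fun i => ?_⟩
  calc (compMat X *ᵥ (cabs (1 - X⁻¹ * A) *ᵥ u)) i
      = ∑ j, (compMat X * cabs (1 - X⁻¹ * A) : Matrix m m ℝ) i j * u j := by
        rw [mulVec_mulVec]; rfl
    _ ≤ ∑ j, cabs (X * (1 - X⁻¹ * A)) i j * u j :=
        Finset.sum_le_sum fun j _ => mul_le_mul_of_nonneg_right (compMat_mul_cabs_le _ _ i j)
          (hu j).le
    _ ≤ θ * (compMat X *ᵥ u) i := by rw [hXW]; exact hθ i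

lemma specRad_cabs_fromBlocks_lt_one {G H : Matrix m m ℂ} {u : m → ℝ} (hu : ∀ i, 0 < u i)
    {θ₁ θ₂ : ℝ} (hθ₁ : 0 ≤ θ₁) (hθ₁' : θ₁ < 1) (hθ₂' : θ₂ < 1)
    (hG : ∀ i, (cabs G *ᵥ u) i ≤ θ₁ * u i) (hH : ∀ i, (cabs H *ᵥ u) i ≤ θ₂ * u i) :
    specRad (cabs (fromBlocks 0 G H 0)) < 1 := by
  have hcabs : cabs (fromBlocks 0 G H 0) = fromBlocks 0 (cabs G) (cabs H) 0 := by
    ext (i | i) (j | j) <;> simp [cabs]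
  have hbound : ∀ i, (cabs (fromBlocks 0 G H 0) *ᵥ Sum.elim u u) i
      ≤ max θ₁ θ₂ * Sum.elim u u i := by
    rintro (i | i)
    · simpa [hcabs, fromBlocks_mulVec] using
        (hG i).trans (mul_le_mul_of_nonneg_right (le_max_left θ₁ θ₂) (hu i).le)
    · simpa [hcabs, fromBlocks_mulVec] using
        (hH i).trans (mul_le_mul_of_nonneg_right (le_max_right θ₁ θ₂) (hu i).le)
  refine (specRad_le_of_mulVec_le (fun _ _ => norm_nonneg _) ?_ (le_max_of_le_left hθ₁)
    hbound).trans_lt (max_lt hθ₁' hθ₂')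
  rintro (i | i) <;> exact hu i

end Splitting

theorem stmt15 {n : ℕ} (A M F : Matrix (Fin n) (Fin n) ℂ)
    (hA : IsHMat A)
    (hM : compMat M - cabs (M - A) = compMat A)
    (hF : compMat F - cabs (F - A) = compMat A) :
    IsUnit M ∧ IsUnit F ∧
      specRad (cabs (Matrix.fromBlocks 0 (1 - M⁻¹ * A) (1 - F⁻¹ * A) 0)) < 1 := by
  obtain ⟨u, hu, hAu⟩ := IsMMat.exists_pos_mulVec_pos hA
  obtain ⟨hMu, θ₁, hθ₁, hθ₁', hM'⟩ :=
    isUnit_and_exists_cabs_one_sub_inv_mul_mulVec_le hM hu hAu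
  obtain ⟨hFu, θ₂, -, hθ₂', hF'⟩ :=
    isUnit_and_exists_cabs_one_sub_inv_mul_mulVec_le hF hu hAu
  exact ⟨hMu, hFu, specRad_cabs_fromBlocks_lt_one hu hθ₁ hθ₁' hθ₂' hM' hF'⟩
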